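/- arXiv:1310.5880 — 6 statements merged into one kernel-verified Lean document; each statement's English description precedes it below -/
import Mathlib

section
/- Let A₀, A₁, …, A_k ∈ ℝ^{n×n} be pairwise commuting normal matrices (i.e., AᵢᵀAᵢ = AᵢAᵢᵀ for each i and AᵢAⱼ = AⱼAᵢ for all i, j). Then the supremum over all unit vectors v ∈ ℝⁿ of the infimum over all real coefficients α₁, …, α_k ∈ ℝ of ‖A₀v − Σ_{i=1}^k αᵢAᵢv‖ equals the infimum over all α₁, …, α_k ∈ ℝ of ‖A₀ − Σ_{i=1}^k αᵢAᵢ‖, where the vector norm is the Euclidean norm on ℝⁿ and the matrix norm is the operator norm induced by the Euclidean norm (spectral norm). -/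
/-!
By Fuglede's theorem each `Aᵢᵀ` commutes with every `Aⱼ`, so the matrices
`X(α) = A₀ - ∑ αᵢ Aᵢ` lie in one commutative *-algebra. The operators `XᵀX` of that algebra have
a common orthonormal eigenbasis `u`, in which `‖X v‖² = ∑ⱼ ⟪uⱼ, v⟫² ‖X uⱼ‖²`. Hence
`‖X(α)‖² = maxⱼ μⱼ(α)` with `μⱼ(α) = ‖X(α) uⱼ‖²` convex in `α`, while the unit vector `v` with
`⟪uⱼ, v⟫² = qⱼ` has `‖X(α) v‖² = ∑ⱼ qⱼ μⱼ(α)`. So the theorem is the minimax identity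
`inf_α maxⱼ μⱼ(α) = sup_q inf_α ∑ⱼ qⱼ μⱼ(α)` over the standard simplex, which follows by separating
the upward closure of `{(μⱼ(α))ⱼ}` from an open orthant.
-/

open Matrix Set Module Function
open scoped RealInnerProductSpace

-- Fuglede's theorem holds in complex C⋆-algebras, into which real matrices embed.
open scoped Matrix.Norms.L2Operator in
theorem Matrix.commute_star_left_of_isStarNormal {ι : Type*} [Fintype ι] [DecidableEq ι]
    {N M : Matrix ι ι ℝ} (hN : IsStarNormal N) (h : Commute N M) : Commute (star N) M := by
  let f : Matrix ι ι ℝ →+* Matrix ι ι ℂ := Complex.ofRealHom.mapMatrix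
  have hf_star : ∀ X, star (f X) = f (star X) := fun X =>
    (Matrix.conjTranspose_map _ fun x => (Complex.conj_ofReal x).symm).symm
  have hfN : IsStarNormal (f N) := ⟨by simpa only [hf_star] using hN.star_comm_self.map f⟩
  have := hfN.commute_star_left (h.map f)
  rw [hf_star] at this
  exact this.of_map (Matrix.map_injective Complex.ofReal_injective)

namespace LinearMap.IsSymmetric

theorem exists_orthonormalBasis_forall_apply_eq_smul {𝕜 E ι : Type*} [RCLike 𝕜]
    [NormedAddCommGroup E] [InnerProductSpace 𝕜 E] [FiniteDimensional 𝕜 E]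
    {T : ι → E →ₗ[𝕜] E} (hT : ∀ i, (T i).IsSymmetric) (hC : Pairwise (Commute on T)) :
    ∃ u : OrthonormalBasis (Fin (finrank 𝕜 E)) 𝕜 E, ∀ i j, ∃ c : 𝕜, T i (u j) = c • u j := by
  classical
  let V : (ι → 𝕜) → Submodule 𝕜 E := fun χ => ⨅ i, End.eigenspace (T i) (χ i)
  have hV : DirectSum.IsInternal V := directSum_isInternal_of_pairwise_commute hT hC
  have hV' := orthogonalFamily_iInf_eigenspaces hT
  let ob := fun χ => stdOrthonormalBasis 𝕜 (V χ)
  let b := hV.collectedBasis fun χ => (ob χ).toBasis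
  let _ : Fintype (Σ χ, Fin (finrank 𝕜 (V χ))) := FiniteDimensional.fintypeBasisIndex b
  let e := Fintype.equivFinOfCardEq (finrank_eq_card_basis b).symm
  let u := b.toOrthonormalBasis (hV.collectedBasis_orthonormal hV' fun χ => (ob χ).orthonormal)
  refine ⟨u.reindex e, fun i j => ⟨(e.symm j).1 i, End.mem_eigenspace_iff.mp ?_⟩⟩
  rw [OrthonormalBasis.reindex_apply, Module.Basis.coe_toOrthonormalBasis]
  exact (Submodule.mem_iInf _).mp (hV.collectedBasis_mem _ _) i

end LinearMap.IsSymmetric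

namespace OrthonormalBasis

variable {ι E F : Type*} [Fintype ι] [NormedAddCommGroup E] [InnerProductSpace ℝ E]
  [SeminormedAddCommGroup F] [NormedSpace ℝ F]

theorem norm_le_iSup_norm_apply (u : OrthonormalBasis ι ℝ E) {X : E →L[ℝ] F}
    (hX : ∀ v, ‖X v‖ ^ 2 = ∑ j, u.repr v j ^ 2 * ‖X (u j)‖ ^ 2) :
    ‖X‖ ≤ ⨆ j, ‖X (u j)‖ := by
  have hM : ∀ j, ‖X (u j)‖ ≤ ⨆ j, ‖X (u j)‖ := le_ciSup (Finite.bddAbove_range _)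
  have hM₀ : 0 ≤ ⨆ j, ‖X (u j)‖ := Real.iSup_nonneg fun _ => norm_nonneg _
  refine X.opNorm_le_bound hM₀ fun v => ?_
  refine (pow_le_pow_iff_left₀ (norm_nonneg _) (by positivity) two_ne_zero).1 ?_
  calc ‖X v‖ ^ 2 = ∑ j, u.repr v j ^ 2 * ‖X (u j)‖ ^ 2 := hX v
    _ ≤ ∑ j, u.repr v j ^ 2 * (⨆ j, ‖X (u j)‖) ^ 2 := by
      gcongr with j
      exact hM j
    _ = ((⨆ j, ‖X (u j)‖) * ‖v‖) ^ 2 := by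
      rw [mul_pow, ← u.sum_sq_inner_right, Finset.mul_sum]
      simp only [u.repr_apply_apply, mul_comm]

theorem exists_norm_eq_one_forall_repr_sq_eq (u : OrthonormalBasis ι ℝ E) {q : ι → ℝ}
    (hq : q ∈ stdSimplex ℝ ι) : ∃ v : E, ‖v‖ = 1 ∧ ∀ j, u.repr v j ^ 2 = q j := by
  refine ⟨u.repr.symm (WithLp.toLp 2 fun j => √(q j)), ?_, fun j => ?_⟩
  · rw [LinearIsometryEquiv.norm_map, EuclideanSpace.norm_eq]
    simp [Real.sq_sqrt (hq.1 _), hq.2]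
  · simp [Real.sq_sqrt (hq.1 j)]

theorem norm_sq_apply_eq_sum_of_star_mul_self [CompleteSpace E] (u : OrthonormalBasis ι ℝ E)
    {X : E →L[ℝ] E} (hX : ∀ j, ∃ c : ℝ, (star X * X) (u j) = c • u j) (v : E) :
    ‖X v‖ ^ 2 = ∑ j, u.repr v j ^ 2 * ‖X (u j)‖ ^ 2 := by
  have hadj : ∀ x y, ⟪x, (star X * X) y⟫ = ⟪X x, X y⟫ := fun x y => by
    rw [ContinuousLinearMap.star_eq_adjoint, ContinuousLinearMap.mul_def,
      ContinuousLinearMap.comp_apply, ContinuousLinearMap.adjoint_inner_right]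
  have heig : ∀ j, (star X * X) (u j) = ‖X (u j)‖ ^ 2 • u j := fun j => by
    obtain ⟨c, hc⟩ := hX j
    have : ⟪u j, (star X * X) (u j)⟫ = c := by
      rw [hc, real_inner_smul_right, real_inner_self_eq_norm_sq, u.norm_eq_one, one_pow, mul_one]
    rw [hc, ← this, hadj, real_inner_self_eq_norm_sq]
  calc ‖X v‖ ^ 2 = ⟪v, (star X * X) v⟫ := by rw [hadj, real_inner_self_eq_norm_sq]
    _ = ∑ j, ⟪v, u j⟫ * ⟪u j, (star X * X) v⟫ := (u.sum_inner_mul_inner _ _).symm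
    _ = ∑ j, u.repr v j ^ 2 * ‖X (u j)‖ ^ 2 := Finset.sum_congr rfl fun j _ => by
      have : ⟪u j, (star X * X) v⟫ = ⟪v, (star X * X) (u j)⟫ := by
        rw [hadj, hadj, real_inner_comm]
      rw [this, heig, real_inner_smul_right, real_inner_comm, u.repr_apply_apply]
      ring

end OrthonormalBasis

theorem StarSubalgebra.exists_orthonormalBasis_norm_sq_apply_eq_sum {E : Type*}
    [NormedAddCommGroup E] [InnerProductSpace ℝ E] [FiniteDimensional ℝ E]
    (S : StarSubalgebra ℝ (E →L[ℝ] E)) [IsMulCommutative S] :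
    ∃ u : OrthonormalBasis (Fin (finrank ℝ E)) ℝ E,
      ∀ X ∈ S, ∀ v, ‖X v‖ ^ 2 = ∑ j, u.repr v j ^ 2 * ‖X (u j)‖ ^ 2 := by
  let T : S → E →ₗ[ℝ] E := fun X => star (X : E →L[ℝ] E) * X
  have hT : ∀ X, (T X).IsSymmetric := fun X =>
    (IsSelfAdjoint.star_mul_self (X : E →L[ℝ] E)).isSymmetric
  have hC : Pairwise (Commute on T) := fun X Y _ =>
    Commute.map (setLike_mul_comm (star X * X).2 (star Y * Y).2)
      ContinuousLinearMap.toLinearMapRingHom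
  obtain ⟨u, hu⟩ := LinearMap.IsSymmetric.exists_orthonormalBasis_forall_apply_eq_smul hT hC
  exact ⟨u, fun X hX => u.norm_sq_apply_eq_sum_of_star_mul_self (hu ⟨X, hX⟩)⟩

section
variable {𝕜 E F ι : Type*} [NontriviallyNormedField 𝕜] [SeminormedAddCommGroup E]
  [NormedSpace 𝕜 E] [SeminormedAddCommGroup F] [NormedSpace 𝕜 F]

theorem iInf_norm_apply_le_norm (T : ι → E →L[𝕜] F) {v : E} (hv : ‖v‖ = 1) (β : ι) :
    ⨅ α, ‖T α v‖ ≤ ‖T β‖ :=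
  (ciInf_le ⟨0, forall_mem_range.2 fun _ => norm_nonneg _⟩ β).trans <| by
    simpa [hv] using (T β).le_opNorm v

theorem iSup_iInf_norm_apply_le_iInf_norm [Nonempty ι] (T : ι → E →L[𝕜] F) :
    ⨆ v : {v : E // ‖v‖ = 1}, ⨅ α, ‖T α v‖ ≤ ⨅ α, ‖T α‖ :=
  Real.iSup_le (fun v => le_ciInf (iInf_norm_apply_le_norm T v.2))
    (Real.iInf_nonneg fun _ => norm_nonneg _)

end

theorem AffineMap.convexOn_norm_sq_apply {V E F : Type*} [AddCommGroup V] [Module ℝ V]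
    [SeminormedAddCommGroup E] [NormedSpace ℝ E] [SeminormedAddCommGroup F] [NormedSpace ℝ F]
    (M : V →ᵃ[ℝ] (E →L[ℝ] F)) (x : E) : ConvexOn ℝ univ fun α => ‖M α x‖ ^ 2 :=
  ((convexOn_norm convex_univ).pow (fun _ _ => norm_nonneg _) 2).comp_affineMap
    ((ContinuousLinearMap.apply ℝ F x : (E →L[ℝ] F) →ₗ[ℝ] F).toAffineMap.comp M)

theorem nonneg_of_forall_le_add_mul {a b u : ℝ} (h : ∀ t, 0 ≤ t → u ≤ a + t * b) : 0 ≤ b := by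
  by_contra! hb
  have := h ((a - u + 1) / -b) (div_nonneg (by linarith [h 0 le_rfl]) (by linarith))
  rw [div_neg, neg_mul, div_mul_cancel₀ _ hb.ne] at this
  linarith

theorem Convex.exists_mem_stdSimplex_forall_le_sum_mul {ι : Type*} [Fintype ι]
    {S : Set (ι → ℝ)} (hS : Convex ℝ S) (hS_add : ∀ x ∈ S, ∀ d, 0 ≤ d → x + d ∈ S)
    (hSne : S.Nonempty) {c c' : ℝ} (hcc' : c < c') (hBS : Disjoint (univ.pi fun _ => Iio c') S) :
    ∃ q ∈ stdSimplex ℝ ι, ∀ x ∈ S, c ≤ ∑ j, q j * x j := by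
  classical
  obtain ⟨f, u, hfB, hfS⟩ := geometric_hahn_banach_open (convex_pi fun _ _ => convex_Iio c')
    (isOpen_set_pi finite_univ fun _ _ => isOpen_Iio) hS hBS
  let w : ι → ℝ := fun j => f (Pi.single j 1)
  have hf : ∀ x, f x = ∑ j, w j * x j := fun x => by
    conv_lhs => rw [pi_eq_sum_univ' x]
    simp [w, map_sum, map_smul, mul_comm]
  obtain ⟨x₀, hx₀⟩ := hSne
  have hw : ∀ j, 0 ≤ w j := fun j => nonneg_of_forall_le_add_mul fun t ht => by
    have := hfS _ (hS_add x₀ hx₀ (t • Pi.single j 1)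
      (smul_nonneg ht (Pi.single_nonneg.2 zero_le_one)))
    rwa [map_add, map_smul, smul_eq_mul] at this
  have hfc : c * ∑ j, w j < u := by
    simpa [hf, Finset.mul_sum, mul_comm] using hfB (fun _ => c) fun j _ => hcc'
  have hw_pos : 0 < ∑ j, w j := by
    refine (Finset.sum_nonneg fun j _ => hw j).lt_of_ne fun h0 => ?_
    have hw0 := (Finset.sum_eq_zero_iff_of_nonneg fun j _ => hw j).1 h0.symm
    have := hfS x₀ hx₀
    simp only [hf, hw0 _ (Finset.mem_univ _), zero_mul, Finset.sum_const_zero] at this hfc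
    linarith
  refine ⟨fun j => w j / ∑ l, w l, ⟨fun j => div_nonneg (hw j) hw_pos.le, ?_⟩, fun x hx => ?_⟩
  · rw [← Finset.sum_div, div_self hw_pos.ne']
  · have := hfS x hx
    rw [hf] at this
    simp_rw [div_mul_eq_mul_div, ← Finset.sum_div, le_div_iff₀ hw_pos]
    linarith

theorem exists_mem_stdSimplex_forall_le_sum_mul {ι V : Type*} [Fintype ι] [AddCommGroup V]
    [Module ℝ V] {μ : ι → V → ℝ} (hμ : ∀ j, ConvexOn ℝ univ (μ j)) {c c' : ℝ} (hcc' : c < c')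
    (hgap : ∀ α, ∃ j, c' ≤ μ j α) :
    ∃ q ∈ stdSimplex ℝ ι, ∀ α, c ≤ ∑ j, q j * μ j α := by
  let S : Set (ι → ℝ) := {x | ∃ α, ∀ j, μ j α ≤ x j}
  have hS : Convex ℝ S := by
    rintro x ⟨α, hα⟩ y ⟨β, hβ⟩ s t hs ht hst
    refine ⟨s • α + t • β, fun j => ?_⟩
    calc μ j (s • α + t • β) ≤ s * μ j α + t * μ j β :=
          (hμ j).2 (mem_univ α) (mem_univ β) hs ht hst
      _ ≤ s * x j + t * y j := by gcongr <;> [exact hα j; exact hβ j]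
  have hS_add : ∀ x ∈ S, ∀ d, 0 ≤ d → x + d ∈ S := by
    rintro x ⟨α, hα⟩ d hd
    exact ⟨α, fun j => (hα j).trans (le_add_of_nonneg_right (hd j))⟩
  have hBS : Disjoint (univ.pi fun _ => Iio c') S := by
    refine disjoint_left.mpr fun x hx ⟨α, hα⟩ => ?_
    obtain ⟨j, hj⟩ := hgap α
    exact (hj.trans (hα j)).not_gt (hx j (mem_univ j))
  obtain ⟨q, hq, hqS⟩ :=
    hS.exists_mem_stdSimplex_forall_le_sum_mul hS_add ⟨_, 0, fun _ => le_rfl⟩ hcc' hBS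
  exact ⟨q, hq, fun α => hqS _ ⟨α, fun _ => le_rfl⟩⟩

theorem iInf_norm_le_iSup_iInf_norm_apply {V ι E F : Type*} [AddCommGroup V] [Module ℝ V]
    [Fintype ι] [NormedAddCommGroup E] [InnerProductSpace ℝ E] [SeminormedAddCommGroup F]
    [NormedSpace ℝ F] (M : V →ᵃ[ℝ] (E →L[ℝ] F)) (u : OrthonormalBasis ι ℝ E)
    (hu : ∀ α v, ‖M α v‖ ^ 2 = ∑ j, u.repr v j ^ 2 * ‖M α (u j)‖ ^ 2) :
    ⨅ α, ‖M α‖ ≤ ⨆ v : {v : E // ‖v‖ = 1}, ⨅ α, ‖M α v‖ := by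
  set L := ⨆ v : {v : E // ‖v‖ = 1}, ⨅ α, ‖M α v‖
  set R := ⨅ α, ‖M α‖
  have hL : 0 ≤ L := Real.iSup_nonneg fun _ => Real.iInf_nonneg fun _ => norm_nonneg _
  by_contra! hLR
  have hgap : ∀ α, ∃ j, R ^ 2 ≤ ‖M α (u j)‖ ^ 2 := by
    intro α
    have hRα : R ≤ ⨆ j, ‖M α (u j)‖ :=
      (ciInf_le ⟨0, forall_mem_range.2 fun _ => norm_nonneg _⟩ α).trans
        (u.norm_le_iSup_norm_apply (hu α))
    cases isEmpty_or_nonempty ι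
    · rw [Real.iSup_of_isEmpty] at hRα
      linarith
    · obtain ⟨j, hj⟩ := exists_eq_ciSup_of_finite (f := fun j => ‖M α (u j)‖)
      exact ⟨j, pow_le_pow_left₀ (hL.trans hLR.le) (hj ▸ hRα) 2⟩
  obtain ⟨m, hLm, hmR⟩ := exists_between hLR
  have hm : 0 ≤ m := hL.trans hLm.le
  obtain ⟨q, hq, hqμ⟩ := exists_mem_stdSimplex_forall_le_sum_mul
    (fun j => M.convexOn_norm_sq_apply (u j)) (pow_lt_pow_left₀ hmR hm two_ne_zero) hgap
  obtain ⟨v, hv, hvq⟩ := u.exists_norm_eq_one_forall_repr_sq_eq hq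
  have hmv : m ≤ ⨅ α, ‖M α v‖ := le_ciInf fun α => by
    refine (pow_le_pow_iff_left₀ hm (norm_nonneg _) two_ne_zero).1 ?_
    rw [hu]
    simpa only [hvq] using hqμ α
  have hvL : ⨅ α, ‖M α v‖ ≤ L :=
    le_ciSup (f := fun v : {v : E // ‖v‖ = 1} => ⨅ α, ‖M α v‖)
      ⟨‖M 0‖, forall_mem_range.2 fun w => iInf_norm_apply_le_norm _ w.2 0⟩ ⟨v, hv⟩
  linarith

theorem StarSubalgebra.iSup_iInf_norm_apply_eq_iInf_norm {V E : Type*} [AddCommGroup V]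
    [Module ℝ V] [NormedAddCommGroup E] [InnerProductSpace ℝ E] [FiniteDimensional ℝ E]
    (S : StarSubalgebra ℝ (E →L[ℝ] E)) [IsMulCommutative S] (M : V →ᵃ[ℝ] (E →L[ℝ] E))
    (hM : ∀ α, M α ∈ S) :
    ⨆ v : {v : E // ‖v‖ = 1}, ⨅ α, ‖M α v‖ = ⨅ α, ‖M α‖ := by
  obtain ⟨u, hu⟩ := S.exists_orthonormalBasis_norm_sq_apply_eq_sum
  exact (iSup_iInf_norm_apply_le_iInf_norm M).antisymm
    (iInf_norm_le_iSup_iInf_norm_apply M u fun α => hu _ (hM α))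

/-- Max-min equals min-max for pairwise commuting normal real matrices
(Greenbaum–Gurvits formulation, real case). -/
theorem maxmin_eq_minmax_commuting_normal_real
    (n k : ℕ) (A : Fin (k + 1) → Matrix (Fin n) (Fin n) ℝ)
    (hnormal : ∀ i, (A i)ᵀ * A i = A i * (A i)ᵀ)
    (hcomm : ∀ i j, A i * A j = A j * A i) :
    (⨆ v : {v : EuclideanSpace ℝ (Fin n) // ‖v‖ = 1},
      ⨅ α : Fin k → ℝ,
        ‖Matrix.toEuclideanCLM (𝕜 := ℝ) (A 0) v.1
          - ∑ i : Fin k, α i • Matrix.toEuclideanCLM (𝕜 := ℝ) (A i.succ) v.1‖)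
    = ⨅ α : Fin k → ℝ,
        ‖Matrix.toEuclideanCLM (𝕜 := ℝ) (A 0 - ∑ i : Fin k, α i • A i.succ)‖ := by
  let T a := toEuclideanCLM (𝕜 := ℝ) (A a)
  have hstar : ∀ a b, Commute (star (A a)) (A b) := fun a b =>
    commute_star_left_of_isStarNormal
      ⟨by rw [star_eq_conjTranspose, conjTranspose_eq_transpose_of_trivial]; exact hnormal a⟩
      (hcomm a b)
  let S := StarAlgebra.adjoin ℝ (range T)
  have : IsMulCommutative S := StarAlgebra.isMulCommutative_adjoin ℝ
    (forall_mem_range.2 fun a => forall_mem_range.2 fun b => by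
      simp only [T, ← map_mul, hcomm a b])
    (forall_mem_range.2 fun a => forall_mem_range.2 fun b => by
      simp only [T, ← map_star, ← map_mul, (hstar b a).eq])
  let M : (Fin k → ℝ) →ᵃ[ℝ] _ := AffineMap.const ℝ _ (T 0) -
    (Fintype.linearCombination ℝ fun i => T i.succ).toAffineMap
  have hM : ∀ α, M α = T 0 - ∑ i, α i • T i.succ := fun α => by
    simp [M, Fintype.linearCombination_apply]
  have hTS : ∀ a, T a ∈ S := fun a => StarAlgebra.subset_adjoin ℝ _ (mem_range_self a)
  have hMS : ∀ α, M α ∈ S := fun α => by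
    rw [hM]
    exact sub_mem (hTS 0) (sum_mem fun i _ => SMulMemClass.smul_mem _ (hTS _))
  convert S.iSup_iInf_norm_apply_eq_iInf_norm M hMS using 5 <;> simp [hM, T]
end

section
/- Let A₀, A₁, …, A_k ∈ ℂ^{n×n} be pairwise commuting normal matrices. Then there exists a unit vector v* ∈ ℂⁿ such that the infimum over all coefficients α₁, …, α_k ∈ ℂ of ‖A₀v* − Σ_{i=1}^k αᵢAᵢv*‖ equals the infimum over all α₁, …, α_k ∈ ℂ of ‖A₀ − Σ_{i=1}^k αᵢAᵢ‖; that is, the worst-case vector for the max-min problem is attained and achieves the min-max value. -/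
/-!
Commuting normal operators are simultaneously unitarily diagonalizable: by Fuglede's theorem their
real and imaginary parts form a commuting family of self-adjoint operators. In a joint orthonormal
eigenbasis `b`, the operator `A₀ - ∑ αᵢ Aᵢ` is diagonal with eigenvalue vector `u - ∑ αᵢ gᵢ`, so its
norm is at most the sup norm of that vector, and the min-max value is at most the `ℓ^∞`-distance
`c` from `u` to `V = span {gᵢ}`. By Hahn–Banach `c` is attained by a functional of norm at most one
vanishing on `V`; its `ℓ¹` coefficients, padded to total mass one, are weights `w` with
`c ≤ ∑ w_j |u_j - x_j|` for every `x ∈ V`. For the unit vector `v = ∑ √w_j b_j` Cauchy–Schwarz gives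
`‖(A₀ - ∑ αᵢ Aᵢ) v‖² = ∑ w_j |(u - ∑ αᵢ gᵢ)_j|² ≥ c²` for every `α`.
-/

open Metric Module.End
open scoped ComplexStarModule InnerProductSpace

section JointEigenbasis

variable {𝕜 E ι : Type*} [RCLike 𝕜] [NormedAddCommGroup E] [InnerProductSpace 𝕜 E]
  [FiniteDimensional 𝕜 E]

theorem LinearMap.IsSymmetric.exists_orthonormalBasis_apply_eq_smul {n : ℕ}
    (hn : Module.finrank 𝕜 E = n) {T : ι → E →ₗ[𝕜] E} (hT : ∀ i, (T i).IsSymmetric)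
    (hcomm : Pairwise (Function.onFun Commute T)) :
    ∃ (b : OrthonormalBasis (Fin n) 𝕜 E) (χ : Fin n → ι → 𝕜), ∀ i j, T i (b j) = χ j i • b j := by
  classical
  let W : (ι → 𝕜) → Submodule 𝕜 E := fun χ => ⨅ i, eigenspace (T i) (χ i)
  have hW : DirectSum.IsInternal W := directSum_isInternal_of_pairwise_commute hT hcomm
  have hWorth := orthogonalFamily_iInf_eigenspaces hT
  let _ : Fintype {χ // W χ ≠ ⊥} := hW.submodule_iSupIndep.fintypeNeBotOfFiniteDimensional
  have hW' : DirectSum.IsInternal fun χ : {χ // W χ ≠ ⊥} => W χ :=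
    DirectSum.isInternal_ne_bot_iff.mpr hW
  have hWorth' := hWorth.comp (Subtype.val_injective (p := fun χ => W χ ≠ ⊥))
  refine ⟨hW'.subordinateOrthonormalBasis hn hWorth',
    fun j => (hW'.subordinateOrthonormalBasisIndex hn j hWorth').1, fun i j => ?_⟩
  exact mem_eigenspace_iff.mp <|
    (Submodule.mem_iInf _).mp (hW'.subordinateOrthonormalBasis_subordinate hn j hWorth') i

end JointEigenbasis

section RealPart

variable {A : Type*} [NonUnitalRing A] [StarRing A] [Module ℂ A] [IsScalarTower ℂ A A]
  [SMulCommClass ℂ A A] [StarModule ℂ A] {a x : A}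

theorem Commute.realPart_right (h : Commute x a) (h' : Commute x (star a)) :
    Commute x (ℜ a : A) := by
  rw [realPart_apply_coe]
  exact (h.add_right h').smul_right _

theorem Commute.imaginaryPart_right (h : Commute x a) (h' : Commute x (star a)) :
    Commute x (ℑ a : A) := by
  rw [imaginaryPart_apply_coe]
  exact ((h.sub_right h').smul_right _).smul_right _

end RealPart

section JointEigenbasisNormal

variable {E ι : Type*} [NormedAddCommGroup E] [InnerProductSpace ℂ E] [FiniteDimensional ℂ E]

theorem IsStarNormal.exists_orthonormalBasis_apply_eq_smul {n : ℕ}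
    (hn : Module.finrank ℂ E = n) {T : ι → E →L[ℂ] E} (hT : ∀ i, IsStarNormal (T i))
    (hcomm : ∀ i j, Commute (T i) (T j)) :
    ∃ (b : OrthonormalBasis (Fin n) ℂ E) (χ : Fin n → ι → ℂ), ∀ i j, T i (b j) = χ j i • b j := by
  have hstar (i j) : Commute (T i) (star (T j)) := (hT j).commute_star_right (hcomm i j)
  have hstar_star (i j) : Commute (star (T i)) (star (T j)) := (hcomm i j).star_star
  let S : ι ⊕ ι → E →L[ℂ] E := Sum.elim (fun i => ℜ (T i)) (fun i => ℑ (T i))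
  have hS_adj (p) : IsSelfAdjoint (S p) := by cases p <;> exact Subtype.prop _
  have hS_T (p j) : Commute (S p) (T j) ∧ Commute (S p) (star (T j)) := by
    cases p with
    | inl i => exact ⟨((hcomm j i).realPart_right (hstar j i)).symm,
        ((hstar i j).symm.realPart_right (hstar_star j i)).symm⟩
    | inr i => exact ⟨((hcomm j i).imaginaryPart_right (hstar j i)).symm,
        ((hstar i j).symm.imaginaryPart_right (hstar_star j i)).symm⟩
  have hS_comm (p q) : Commute (S p) (S q) := by
    cases q with
    | inl j => exact (hS_T p j).1.realPart_right (hS_T p j).2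
    | inr j => exact (hS_T p j).1.imaginaryPart_right (hS_T p j).2
  obtain ⟨b, χ, hb⟩ := LinearMap.IsSymmetric.exists_orthonormalBasis_apply_eq_smul hn
    (T := fun p => (S p : E →ₗ[ℂ] E)) (fun p => (hS_adj p).isSymmetric)
    (fun p q _ => congrArg ContinuousLinearMap.toLinearMap (hS_comm p q).eq)
  refine ⟨b, fun j i => χ j (.inl i) + Complex.I * χ j (.inr i), fun i j => ?_⟩
  have hre := hb (.inl i) j
  have him := hb (.inr i) j
  simp only [S, Sum.elim_inl, Sum.elim_inr, ContinuousLinearMap.coe_coe] at hre him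
  rw [← realPart_add_I_smul_imaginaryPart (T i), add_apply, smul_apply, hre, him, smul_smul,
    add_smul]

end JointEigenbasisNormal

section Diagonal

variable {𝕜 E κ : Type*} [RCLike 𝕜] [NormedAddCommGroup E] [InnerProductSpace 𝕜 E] [Fintype κ]
  (b : OrthonormalBasis κ 𝕜 E) {f : E →L[𝕜] E} {μ : κ → 𝕜}

namespace OrthonormalBasis

theorem inner_apply_of_apply_eq_smul (hf : ∀ j, f (b j) = μ j • b j) (v : E) (j : κ) :
    ⟪b j, f v⟫_𝕜 = μ j * ⟪b j, v⟫_𝕜 := by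
  conv_lhs => rw [← b.sum_repr' v]
  simp only [map_sum, map_smul, hf, smul_smul, b.orthonormal.inner_right_fintype, mul_comm]

theorem norm_sq_apply_of_apply_eq_smul (hf : ∀ j, f (b j) = μ j • b j) (v : E) :
    ‖f v‖ ^ 2 = ∑ j, ‖μ j‖ ^ 2 * ‖⟪b j, v⟫_𝕜‖ ^ 2 := by
  simp only [← b.sum_sq_norm_inner_right, b.inner_apply_of_apply_eq_smul hf, norm_mul, mul_pow]

theorem opNorm_le_of_apply_eq_smul (hf : ∀ j, f (b j) = μ j • b j) : ‖f‖ ≤ ‖μ‖ := by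
  refine f.opNorm_le_bound (norm_nonneg μ) fun v => ?_
  refine (pow_le_pow_iff_left₀ (norm_nonneg _) (by positivity) two_ne_zero).mp ?_
  calc ‖f v‖ ^ 2 = ∑ j, ‖μ j‖ ^ 2 * ‖⟪b j, v⟫_𝕜‖ ^ 2 := b.norm_sq_apply_of_apply_eq_smul hf v
    _ ≤ ∑ j, ‖μ‖ ^ 2 * ‖⟪b j, v⟫_𝕜‖ ^ 2 := by gcongr with j; exact norm_le_pi_norm μ j
    _ = (‖μ‖ * ‖v‖) ^ 2 := by rw [← Finset.mul_sum, b.sum_sq_norm_inner_right, mul_pow]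

variable {w : κ → ℝ}

theorem norm_sum_sqrt_smul (hw : ∀ j, 0 ≤ w j) (hw₁ : ∑ j, w j = 1) :
    ‖∑ j, (√(w j) : 𝕜) • b j‖ = 1 := by
  refine (pow_eq_one_iff_of_nonneg (norm_nonneg _) two_ne_zero).mp ?_
  simp only [← b.sum_sq_norm_inner_right, b.orthonormal.inner_right_fintype, RCLike.norm_ofReal,
    sq_abs, Real.sq_sqrt (hw _), hw₁]

theorem sum_mul_norm_le_norm_apply_sum_sqrt_smul (hf : ∀ j, f (b j) = μ j • b j)
    (hw : ∀ j, 0 ≤ w j) (hw₁ : ∑ j, w j = 1) :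
    ∑ j, w j * ‖μ j‖ ≤ ‖f (∑ j, (√(w j) : 𝕜) • b j)‖ := by
  refine (pow_le_pow_iff_left₀ (Finset.sum_nonneg fun j _ => mul_nonneg (hw j) (norm_nonneg _))
    (norm_nonneg _) two_ne_zero).mp ?_
  calc (∑ j, w j * ‖μ j‖) ^ 2 ≤ (∑ j, w j) * ∑ j, w j * ‖μ j‖ ^ 2 :=
        Finset.sum_sq_le_sum_mul_sum_of_sq_le_mul _ (fun j _ => hw j)
          (fun j _ => mul_nonneg (hw j) (sq_nonneg _)) fun j _ => le_of_eq (by ring)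
    _ = ‖f (∑ j, (√(w j) : 𝕜) • b j)‖ ^ 2 := by
        simp only [hw₁, one_mul, b.norm_sq_apply_of_apply_eq_smul hf,
          b.orthonormal.inner_right_fintype, RCLike.norm_ofReal, sq_abs, Real.sq_sqrt (hw _),
          mul_comm]

end OrthonormalBasis

end Diagonal

theorem RCLike.exists_norm_le_one_mul_eq_norm {𝕜 : Type*} [RCLike 𝕜] (a : 𝕜) :
    ∃ z : 𝕜, ‖z‖ ≤ 1 ∧ z * a = ‖a‖ := by
  refine ⟨starRingEnd 𝕜 a / ‖a‖, ?_, ?_⟩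
  · rw [norm_div, RCLike.norm_conj, RCLike.norm_ofReal, abs_norm]
    exact div_self_le_one _
  · rcases eq_or_ne a 0 with rfl | ha
    · simp
    · rw [div_mul_eq_mul_div, RCLike.conj_mul, sq, mul_div_assoc, div_self (by simpa using ha),
        mul_one]

theorem Submodule.exists_strongDual_apply_eq_infDist {𝕜 F : Type*} [RCLike 𝕜]
    [SeminormedAddCommGroup F] [NormedSpace 𝕜 F] (V : Submodule 𝕜 F) (u : F) :
    ∃ φ : StrongDual 𝕜 F, ‖φ‖ ≤ 1 ∧ (∀ x ∈ V, φ x = 0) ∧ φ u = infDist u V := by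
  obtain ⟨G, hG, hGu⟩ := exists_dual_vector'' 𝕜 (V.mkQ u)
  refine ⟨G.comp V.mkQL, ?_, fun x hx => ?_, ?_⟩
  · refine ContinuousLinearMap.opNorm_le_bound _ zero_le_one fun x => ?_
    calc ‖G (V.mkQ x)‖ ≤ ‖G‖ * ‖V.mkQ x‖ := G.le_opNorm _
      _ ≤ 1 * ‖x‖ := by gcongr; exact Submodule.Quotient.norm_mk_le V x
  · simp [(Submodule.Quotient.mk_eq_zero V).mpr hx]
  · have := QuotientAddGroup.norm_mk (S := V.toAddSubgroup) u
    rw [ContinuousLinearMap.comp_apply, Submodule.mkQL_apply, hGu]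
    exact congrArg _ this

section SupNorm

variable {𝕜 ι : Type*} [RCLike 𝕜] [Fintype ι] [DecidableEq ι]

theorem ContinuousLinearMap.apply_eq_sum_mul_apply_single (φ : StrongDual 𝕜 (ι → 𝕜))
    (y : ι → 𝕜) : φ y = ∑ j, y j * φ (Pi.single j 1) := by
  conv_lhs => rw [← Finset.univ_sum_single y, map_sum]
  refine Finset.sum_congr rfl fun j _ => ?_
  rw [← smul_eq_mul, ← map_smul, ← Pi.single_smul', smul_eq_mul, mul_one]

theorem ContinuousLinearMap.norm_apply_le_sum_norm_apply_single_mul (φ : StrongDual 𝕜 (ι → 𝕜))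
    (y : ι → 𝕜) : ‖φ y‖ ≤ ∑ j, ‖φ (Pi.single j 1)‖ * ‖y j‖ := by
  rw [φ.apply_eq_sum_mul_apply_single]
  refine (norm_sum_le _ _).trans_eq (Finset.sum_congr rfl fun j _ => ?_)
  rw [norm_mul, mul_comm]

theorem ContinuousLinearMap.sum_norm_apply_single_le_opNorm (φ : StrongDual 𝕜 (ι → 𝕜)) :
    ∑ j, ‖φ (Pi.single j 1)‖ ≤ ‖φ‖ := by
  choose z hz₁ hz using fun j => RCLike.exists_norm_le_one_mul_eq_norm (φ (Pi.single j 1))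
  have hφz : φ z = ((∑ j, ‖φ (Pi.single j 1)‖ : ℝ) : 𝕜) := by
    rw [φ.apply_eq_sum_mul_apply_single, RCLike.ofReal_sum]
    exact Finset.sum_congr rfl fun j _ => hz j
  calc ∑ j, ‖φ (Pi.single j 1)‖ = ‖φ z‖ := by
        rw [hφz, RCLike.norm_ofReal, abs_of_nonneg (Finset.sum_nonneg fun j _ => norm_nonneg _)]
    _ ≤ ‖φ‖ * ‖z‖ := φ.le_opNorm z
    _ ≤ ‖φ‖ :=
        mul_le_of_le_one_right (norm_nonneg φ) ((pi_norm_le_iff_of_nonneg zero_le_one).mpr hz₁)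

theorem exists_weights_infDist_le_sum_mul_norm_sub [Nonempty ι] (V : Submodule 𝕜 (ι → 𝕜))
    (u : ι → 𝕜) : ∃ w : ι → ℝ, (∀ j, 0 ≤ w j) ∧ ∑ j, w j = 1 ∧
      ∀ x ∈ V, infDist u V ≤ ∑ j, w j * ‖u j - x j‖ := by
  obtain ⟨φ, hφ, hφV, hφu⟩ := V.exists_strongDual_apply_eq_infDist u
  set s := ∑ j, ‖φ (Pi.single j 1)‖
  have hs : s ≤ 1 := φ.sum_norm_apply_single_le_opNorm.trans hφ
  have hcard : (0 : ℝ) < Fintype.card ι := Nat.cast_pos.mpr Fintype.card_pos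
  let w j := ‖φ (Pi.single j 1)‖ + (1 - s) / Fintype.card ι
  have hw j : ‖φ (Pi.single j 1)‖ ≤ w j :=
    le_add_of_nonneg_right (div_nonneg (sub_nonneg.mpr hs) hcard.le)
  refine ⟨w, fun j => (norm_nonneg _).trans (hw j), ?_, fun x hx => ?_⟩
  · simp only [w, Finset.sum_add_distrib, Finset.sum_const, Finset.card_univ, nsmul_eq_mul]
    field_simp
    ring
  · calc infDist u V = ‖φ (u - x)‖ := by
          rw [map_sub, hφV x hx, sub_zero, hφu, RCLike.norm_ofReal, abs_of_nonneg infDist_nonneg]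
      _ ≤ ∑ j, ‖φ (Pi.single j 1)‖ * ‖u j - x j‖ := φ.norm_apply_le_sum_norm_apply_single_mul _
      _ ≤ ∑ j, w j * ‖u j - x j‖ := by gcongr with j; exact hw j

end SupNorm

theorem OrthonormalBasis.exists_norm_eq_one_iInf_norm_apply_sub_sum_eq
    {𝕜 E κ ι : Type*} [RCLike 𝕜] [NormedAddCommGroup E] [InnerProductSpace 𝕜 E] [Fintype κ]
    [Nonempty κ] [Fintype ι] (b : OrthonormalBasis κ 𝕜 E) {T₀ : E →L[𝕜] E} {T : ι → E →L[𝕜] E}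
    {μ₀ : κ → 𝕜} {μ : κ → ι → 𝕜} (h₀ : ∀ j, T₀ (b j) = μ₀ j • b j)
    (h : ∀ i j, T i (b j) = μ j i • b j) :
    ∃ v : E, ‖v‖ = 1 ∧
      ⨅ α : ι → 𝕜, ‖T₀ v - ∑ i, α i • T i v‖ = ⨅ α : ι → 𝕜, ‖T₀ - ∑ i, α i • T i‖ := by
  classical
  let P : (ι → 𝕜) → E →L[𝕜] E := fun α => T₀ - ∑ i, α i • T i
  let g : ι → κ → 𝕜 := fun i j => μ j i
  let V := Submodule.span 𝕜 (Set.range g)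
  have hP α j : P α (b j) = (μ₀ - ∑ i, α i • g i) j • b j := by
    simp [P, g, h₀, h, sub_smul, Finset.sum_smul, smul_smul]
  have hbdd : BddBelow (Set.range fun α => ‖P α‖) :=
    ⟨0, Set.forall_mem_range.2 fun _ => norm_nonneg _⟩
  have hdist : ⨅ α, ‖P α‖ ≤ infDist μ₀ V := by
    refine (le_infDist ⟨0, V.zero_mem⟩).mpr fun x hx => ?_
    obtain ⟨α, rfl⟩ := (Submodule.mem_span_range_iff_exists_fun 𝕜).mp hx
    calc ⨅ α, ‖P α‖ ≤ ‖P α‖ := ciInf_le hbdd α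
      _ ≤ ‖μ₀ - ∑ i, α i • g i‖ := b.opNorm_le_of_apply_eq_smul (hP α)
      _ = dist μ₀ (∑ i, α i • g i) := (dist_eq_norm _ _).symm
  obtain ⟨w, hw, hw₁, hdist_le⟩ := exists_weights_infDist_le_sum_mul_norm_sub V μ₀
  set v := ∑ j, (√(w j) : 𝕜) • b j
  have hv : ‖v‖ = 1 := b.norm_sum_sqrt_smul hw hw₁
  have hPv α : T₀ v - ∑ i, α i • T i v = P α v := by simp [P]
  refine ⟨v, hv, ?_⟩
  simp only [hPv]
  refine le_antisymm (ciInf_mono ⟨0, Set.forall_mem_range.2 fun _ => norm_nonneg _⟩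
    fun α => by simpa [hv] using (P α).le_opNorm v) (le_ciInf fun α => ?_)
  calc ⨅ α, ‖P α‖ ≤ infDist μ₀ V := hdist
    _ ≤ ∑ j, w j * ‖μ₀ j - (∑ i, α i • g i) j‖ :=
        hdist_le _ (Submodule.sum_mem _ fun i _ => V.smul_mem _ (Submodule.subset_span ⟨i, rfl⟩))
    _ ≤ ‖P α v‖ := b.sum_mul_norm_le_norm_apply_sum_sqrt_smul (hP α) hw hw₁

open Matrix

/-- For pairwise commuting normal complex matrices, the worst-case vector of the
max-min problem is attained and achieves the min-max value. -/
theorem exists_worst_case_vector_commuting_normal_complex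
    (n k : ℕ) (hn : 0 < n) (A : Fin (k + 1) → Matrix (Fin n) (Fin n) ℂ)
    (hnormal : ∀ i, (A i)ᴴ * A i = A i * (A i)ᴴ)
    (hcomm : ∀ i j, A i * A j = A j * A i) :
    ∃ vstar : EuclideanSpace ℂ (Fin n), ‖vstar‖ = 1 ∧
      (⨅ α : Fin k → ℂ,
        ‖Matrix.toEuclideanCLM (𝕜 := ℂ) (A 0) vstar
          - ∑ i : Fin k, α i • Matrix.toEuclideanCLM (𝕜 := ℂ) (A i.succ) vstar‖)
      = ⨅ α : Fin k → ℂ,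
          ‖Matrix.toEuclideanCLM (𝕜 := ℂ) (A 0 - ∑ i : Fin k, α i • A i.succ)‖ := by
  let T i := Matrix.toEuclideanCLM (𝕜 := ℂ) (A i)
  have hT_normal i : IsStarNormal (T i) :=
    ⟨by simpa only [T, ← map_star, Matrix.star_eq_conjTranspose] using
      (show Commute (A i)ᴴ (A i) from hnormal i).map _⟩
  have hT_comm i j : Commute (T i) (T j) := (show Commute (A i) (A j) from hcomm i j).map _
  obtain ⟨b, χ, hb⟩ :=
    IsStarNormal.exists_orthonormalBasis_apply_eq_smul finrank_euclideanSpace_fin hT_normal hT_comm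
  have : Nonempty (Fin n) := ⟨⟨0, hn⟩⟩
  obtain ⟨v, hv, hinf⟩ := b.exists_norm_eq_one_iInf_norm_apply_sub_sum_eq
    (T := fun i : Fin k => T i.succ) (hb 0) fun i => hb i.succ
  refine ⟨v, hv, ?_⟩
  simpa only [map_sub, map_sum, map_smul] using hinf
end

section
/- Let Γ ⊂ ℂ be a finite nonempty set, let f, φ₁, …, φ_k : ℂ → ℂ be functions, and let p* = Σ_{i=1}^k αᵢφᵢ with α₁, …, α_k ∈ ℂ. Suppose there exist ℓ points μ₁, …, μ_ℓ ∈ Γ with |f(μⱼ) − p*(μⱼ)| = max_{z∈Γ} |f(z) − p*(z)| for each j, and positive real numbers ω₁, …, ω_ℓ with ω₁ + ⋯ + ω_ℓ = 1, such that Σ_{j=1}^ℓ ωⱼ (f(μⱼ) − p*(μⱼ)) · conj(p(μⱼ)) = 0 for every p in the complex linear span of φ₁, …, φ_k. Then p* is a polynomial of best approximation for f on Γ, i.e., max_{z∈Γ} |f(z) − p*(z)| = min over all q in the complex linear span of φ₁, …, φ_k of max_{z∈Γ} |f(z) − q(z)|. -/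
/-! Write `e = f - p*` and `E = ‖e‖_Γ`. For any `q` in the span, `f - q = e + (p* - q)` with
`p* - q` in the span, so the orthogonality condition and `|e(μⱼ)| = E` give
`Σ ωⱼ e(μⱼ) conj((f - q)(μⱼ)) = E²`. Bounding each term by `ωⱼ E ‖f - q‖_Γ` yields
`E² ≤ E ‖f - q‖_Γ`, hence `E ≤ ‖f - q‖_Γ`. -/

open Finset ComplexConjugate

section WeightedOrthogonality

variable {𝕜 ι : Type*} [RCLike 𝕜] [Fintype ι] {ω : ι → ℝ} {e d g : ι → 𝕜} {E M : ℝ}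

theorem sum_weight_mul_conj_add_eq_sq (hω : ∑ j, ω j = 1) (he : ∀ j, ‖e j‖ = E)
    (horth : ∑ j, (ω j : 𝕜) * e j * conj (d j) = 0) :
    ∑ j, (ω j : 𝕜) * e j * conj (e j + d j) = (E : 𝕜) ^ 2 := by
  simp_rw [map_add, mul_add, sum_add_distrib, horth, add_zero, mul_assoc, RCLike.mul_conj, he]
  rw [← sum_mul, ← RCLike.ofReal_sum, hω, RCLike.ofReal_one, one_mul]

theorem norm_sum_weight_mul_conj_le (hω : ∀ j, 0 ≤ ω j) (hE : 0 ≤ E) (he : ∀ j, ‖e j‖ ≤ E)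
    (hg : ∀ j, ‖g j‖ ≤ M) :
    ‖∑ j, (ω j : 𝕜) * e j * conj (g j)‖ ≤ (∑ j, ω j) * (E * M) := by
  rw [sum_mul]
  refine (norm_sum_le _ _).trans (sum_le_sum fun j _ => ?_)
  rw [norm_mul, norm_mul, RCLike.norm_conj, RCLike.norm_ofReal, abs_of_nonneg (hω j), mul_assoc]
  exact mul_le_mul_of_nonneg_left
    (mul_le_mul (he j) (hg j) (norm_nonneg _) hE) (hω j)

theorem le_of_weighted_orthogonal (hω : ∀ j, 0 ≤ ω j) (hω1 : ∑ j, ω j = 1)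
    (he : ∀ j, ‖e j‖ = E) (hM : ∀ j, ‖e j + d j‖ ≤ M)
    (horth : ∑ j, (ω j : 𝕜) * e j * conj (d j) = 0) :
    E ≤ M := by
  obtain ⟨j, -, -⟩ := exists_ne_zero_of_sum_ne_zero (hω1.trans_ne one_ne_zero)
  have hE : 0 ≤ E := he j ▸ norm_nonneg _
  have hM0 : 0 ≤ M := (norm_nonneg _).trans (hM j)
  have hsq : E ^ 2 ≤ E * M := by
    have := norm_sum_weight_mul_conj_le hω hE (fun j => (he j).le) hM
    rwa [sum_weight_mul_conj_add_eq_sq hω1 he horth, hω1, one_mul, norm_pow,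
      RCLike.norm_ofReal, abs_of_nonneg hE] at this
  nlinarith

end WeightedOrthogonality

/-- Sufficiency part of the Rivlin–Shapiro characterization of best approximation
on a finite set in the complex plane. -/
theorem best_approx_of_orthogonality_condition
    (k : ℕ) (Γ : Finset ℂ) (hΓ : Γ.Nonempty)
    (f : ℂ → ℂ) (φ : Fin k → ℂ → ℂ) (α : Fin k → ℂ)
    (pstar : ℂ → ℂ) (hpstar : pstar = fun z => ∑ i : Fin k, α i * φ i z)
    (ℓ : ℕ) (μ : Fin ℓ → ℂ) (hμΓ : ∀ j, μ j ∈ Γ)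
    (hext : ∀ j, ‖f (μ j) - pstar (μ j)‖ =
      Γ.sup' hΓ fun z => ‖f z - pstar z‖)
    (ω : Fin ℓ → ℝ) (hωpos : ∀ j, 0 < ω j) (hωsum : ∑ j, ω j = 1)
    (horth : ∀ β : Fin k → ℂ,
      ∑ j, (ω j : ℂ) * (f (μ j) - pstar (μ j)) *
        (starRingEnd ℂ) (∑ i : Fin k, β i * φ i (μ j)) = 0) :
    ∀ β : Fin k → ℂ,
      (Γ.sup' hΓ fun z => ‖f z - pstar z‖) ≤
        Γ.sup' hΓ fun z => ‖f z - ∑ i : Fin k, β i * φ i z‖ := by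
  intro β
  have hdiff : ∀ z, f z - ∑ i, β i * φ i z = (f z - pstar z) + ∑ i, (α i - β i) * φ i z := by
    simp [hpstar, sub_mul, sum_sub_distrib]
  refine le_of_weighted_orthogonal (fun j => (hωpos j).le) hωsum hext (fun j => ?_)
    (horth fun i => α i - β i)
  rw [← hdiff]
  exact le_sup' (fun z => ‖f z - ∑ i, β i * φ i z‖) (hμΓ j)
end

section
/- Let Γ ⊂ ℂ be a finite nonempty set, let f, φ₁, …, φ_k : ℂ → ℂ be functions, and suppose p* in the complex linear span of φ₁, …, φ_k is a polynomial of best approximation for f on Γ. Then there exist an integer ℓ with 1 ≤ ℓ ≤ 2k + 1, pairwise distinct points μ₁, …, μ_ℓ ∈ Γ satisfying |f(μⱼ) − p*(μⱼ)| = max_{z∈Γ} |f(z) − p*(z)| for each j, and positive real numbers ω₁, …, ω_ℓ with ω₁ + ⋯ + ω_ℓ = 1, such that Σ_{j=1}^ℓ ωⱼ (f(μⱼ) − p*(μⱼ)) · conj(p(μⱼ)) = 0 for every p in the complex linear span of φ₁, …, φ_k. -/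
/-!
Write `e = f - p*`, `M = ‖e‖_Γ`, and `E` for the points of `Γ` where `|e| = M`. If `0` were not
in the convex hull of the vectors `(e(z) · conj φᵢ(z))ᵢ ∈ ℂᵏ ≅ ℝ²ᵏ`, `z ∈ E`, a separating
hyperplane would give coefficients `b` with `Re (e(z) · conj p_b(z)) > 0` on `E`. Then `p* + t p_b`
beats `p*` for small `t > 0`: it lowers `|e|` to first order on `E`, and elsewhere `|e|` stays
below `M`. So `0` is a convex combination of these vectors, with at most `2k + 1` of them by
Carathéodory's theorem in `ℝ²ᵏ`, and pairing that combination with the coefficients of `p` gives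
the orthogonality relation.
-/

open Finset Complex Filter Topology ComplexConjugate

section RealInnerProductSpace

variable {F : Type*} [NormedAddCommGroup F] [InnerProductSpace ℝ F]

theorem eventually_norm_sub_smul_lt {x y : F} {M : ℝ} (hx : ‖x‖ ≤ M)
    (hxy : ‖x‖ = M → 0 < inner ℝ x y) : ∀ᶠ t in 𝓝[>] (0 : ℝ), ‖x - t • y‖ < M := by
  rcases hx.lt_or_eq with hlt | heq
  · have hcont : Tendsto (fun t : ℝ => ‖x - t • y‖) (𝓝 0) (𝓝 ‖x‖) :=
      (by fun_prop : Continuous fun t : ℝ => ‖x - t • y‖).tendsto' 0 _ (by simp)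
    exact nhdsWithin_le_nhds (hcont.eventually (gt_mem_nhds hlt))
  · -- `‖x - t • y‖² = M² - t (2⟪x, y⟫ - t ‖y‖²)`, and the bracket stays positive near `t = 0`.
    have hslope : Tendsto (fun t : ℝ => 2 * inner ℝ x y - t * ‖y‖ ^ 2) (𝓝 0)
        (𝓝 (2 * inner ℝ x y)) :=
      (by fun_prop : Continuous fun t : ℝ => 2 * inner ℝ x y - t * ‖y‖ ^ 2).tendsto' 0 _
        (by simp)
    filter_upwards [self_mem_nhdsWithin,
      nhdsWithin_le_nhds (hslope.eventually (lt_mem_nhds (by linarith [hxy heq] : (0 : ℝ) < _)))]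
      with t (ht : 0 < t) hpos
    have hsq : ‖x - t • y‖ ^ 2 = M ^ 2 - t * (2 * inner ℝ x y - t * ‖y‖ ^ 2) := by
      rw [norm_sub_sq_real, norm_smul, inner_smul_right, heq, Real.norm_eq_abs, abs_of_pos ht]
      ring
    refine lt_of_pow_lt_pow_left₀ 2 (heq ▸ norm_nonneg x) ?_
    rw [hsq]
    nlinarith [mul_pos ht hpos]

theorem exists_pos_forall_norm_sub_smul_lt {α : Type*} (Γ : Finset α) (e g : α → F) {M : ℝ}
    (he : ∀ z ∈ Γ, ‖e z‖ ≤ M) (heg : ∀ z ∈ Γ, ‖e z‖ = M → 0 < inner ℝ (e z) (g z)) :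
    ∃ t : ℝ, 0 < t ∧ ∀ z ∈ Γ, ‖e z - t • g z‖ < M :=
  (((eventually_all_finset Γ).2 fun z hz =>
    eventually_norm_sub_smul_lt (he z hz) (heg z hz)).and self_mem_nhdsWithin).exists.imp
    fun _ h => ⟨h.2, h.1⟩

theorem exists_forall_inner_pos_of_zero_notMem_convexHull [CompleteSpace F] {S : Set F}
    (hS : S.Finite) (h0 : (0 : F) ∉ convexHull ℝ S) : ∃ b : F, ∀ s ∈ S, 0 < inner ℝ s b := by
  obtain ⟨L, u, hLu, hu⟩ := geometric_hahn_banach_closed_point (convex_convexHull ℝ S)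
    (hS.isCompact_convexHull (𝕜 := ℝ)).isClosed h0
  refine ⟨-(InnerProductSpace.toDual ℝ F).symm L, fun s hs => ?_⟩
  rw [inner_neg_right, real_inner_comm, InnerProductSpace.toDual_symm_apply]
  have := hLu s (subset_convexHull ℝ S hs)
  rw [map_zero] at hu
  linarith

end RealInnerProductSpace

theorem exists_fin_pos_convex_combination_of_mem_convexHull_image {𝕜 E α : Type*} [Field 𝕜]
    [LinearOrder 𝕜] [IsStrictOrderedRing 𝕜] [AddCommGroup E] [Module 𝕜 E] [FiniteDimensional 𝕜 E]
    {c : α → E} {s : Set α} {x : E} (hx : x ∈ convexHull 𝕜 (c '' s)) :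
    ∃ ℓ : ℕ, 1 ≤ ℓ ∧ ℓ ≤ Module.finrank 𝕜 E + 1 ∧
      ∃ μ : Fin ℓ → α, Function.Injective μ ∧ (∀ j, μ j ∈ s) ∧
        ∃ ω : Fin ℓ → 𝕜, (∀ j, 0 < ω j) ∧ ∑ j, ω j = 1 ∧ ∑ j, ω j • c (μ j) = x := by
  obtain ⟨ι, _, v, w, hvs, hv, hwpos, hwsum, hvx⟩ := eq_pos_convex_span_of_mem_convexHull hx
  choose ν hνs hνv using fun i => hvs ⟨i, rfl⟩
  have hcard : Fintype.card ι ≤ Module.finrank 𝕜 E + 1 :=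
    hv.card_le_finrank_succ.trans (Nat.succ_le_succ (Submodule.finrank_le _))
  have hne : Nonempty ι := by
    by_contra h
    rw [not_nonempty_iff] at h
    simp at hwsum
  let σ := (Fintype.equivFin ι).symm
  refine ⟨Fintype.card ι, Fintype.card_pos, hcard, ν ∘ σ, ?_, fun j => hνs _, w ∘ σ,
    fun j => hwpos _, by simpa [Function.comp_def] using (σ.sum_comp w).trans hwsum, ?_⟩
  · exact fun i j hij => σ.injective (hv.injective (by simpa [hνv] using congrArg c hij))
  · simpa [Function.comp_def, hνv] using (σ.sum_comp fun i => w i • v i).trans hvx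

section ErrorConjVector

variable {ι α : Type*} [Fintype ι] (φ : ι → α → ℂ) (e : α → ℂ) (z : α)

/-- Pairing it with coefficients `β` evaluates `e · conj p_β` at `z`, where `p_β = ∑ βᵢ φᵢ`. -/
def errorConjVector : EuclideanSpace ℂ ι :=
  WithLp.toLp 2 fun i => e z * conj (φ i z)

theorem inner_toLp_errorConjVector (β : ι → ℂ) :
    inner ℂ (WithLp.toLp 2 β) (errorConjVector φ e z) = e z * conj (∑ i, β i * φ i z) := by
  simp only [errorConjVector, PiLp.inner_apply, RCLike.inner_apply, map_sum, map_mul, mul_sum]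
  exact sum_congr rfl fun i _ => by ring

theorem real_inner_errorConjVector (b : EuclideanSpace ℂ ι) :
    inner ℝ (errorConjVector φ e z) b = inner ℝ (e z) (∑ i, b i * φ i z) := by
  simp only [errorConjVector, PiLp.inner_apply, Complex.inner, map_mul, conj_conj, sum_mul,
    re_sum]
  exact sum_congr rfl fun i _ => by ring_nf

end ErrorConjVector

theorem finrank_real_euclideanSpace_complex (ι : Type*) [Fintype ι] :
    Module.finrank ℝ (EuclideanSpace ℂ ι) = 2 * Fintype.card ι := by
  rw [(WithLp.linearEquiv 2 ℝ (ι → ℂ)).finrank_eq, Module.finrank_pi_fintype]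
  simp [mul_comm]

/-- Necessity part of the Rivlin–Shapiro characterization of best approximation
on a finite set in the complex plane. -/
theorem orthogonality_condition_of_best_approx
    (k : ℕ) (Γ : Finset ℂ) (hΓ : Γ.Nonempty)
    (f : ℂ → ℂ) (φ : Fin k → ℂ → ℂ) (α : Fin k → ℂ)
    (pstar : ℂ → ℂ) (hpstar : pstar = fun z => ∑ i : Fin k, α i * φ i z)
    (hbest : ∀ β : Fin k → ℂ,
      (Γ.sup' hΓ fun z => ‖f z - pstar z‖) ≤
        Γ.sup' hΓ fun z => ‖f z - ∑ i : Fin k, β i * φ i z‖) :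
    ∃ ℓ : ℕ, 1 ≤ ℓ ∧ ℓ ≤ 2 * k + 1 ∧
      ∃ μ : Fin ℓ → ℂ, Function.Injective μ ∧ (∀ j, μ j ∈ Γ) ∧
        (∀ j, ‖f (μ j) - pstar (μ j)‖ =
          Γ.sup' hΓ fun z => ‖f z - pstar z‖) ∧
        ∃ ω : Fin ℓ → ℝ, (∀ j, 0 < ω j) ∧ (∑ j, ω j = 1) ∧
          ∀ β : Fin k → ℂ,
            ∑ j, (ω j : ℂ) * (f (μ j) - pstar (μ j)) *
              (starRingEnd ℂ) (∑ i : Fin k, β i * φ i (μ j)) = 0 := by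
  classical
  set e : ℂ → ℂ := fun z => f z - pstar z
  set M := Γ.sup' hΓ fun z => ‖e z‖
  set E := Γ.filter fun z => ‖e z‖ = M
  -- Otherwise a separating direction `b` makes `pstar + t p_b` a strictly better approximant.
  have h0 : (0 : EuclideanSpace ℂ (Fin k)) ∈ convexHull ℝ (errorConjVector φ e '' E) := by
    by_contra h0
    obtain ⟨b, hb⟩ := exists_forall_inner_pos_of_zero_notMem_convexHull
      (E.finite_toSet.image _) h0
    obtain ⟨t, -, ht⟩ := exists_pos_forall_norm_sub_smul_lt Γ e (fun z => ∑ i, b i * φ i z)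
      (fun z hz => le_sup' (fun z => ‖e z‖) hz) fun z hz hzM => by
        rw [← real_inner_errorConjVector]
        exact hb _ ⟨z, by simpa [E] using ⟨hz, hzM⟩, rfl⟩
    have hsub : ∀ z, f z - ∑ i, (α i + t * b i) * φ i z = e z - t • ∑ i, b i * φ i z := by
      intro z
      simp only [e, hpstar, add_mul, sum_add_distrib, real_smul, mul_sum, mul_assoc]
      ring
    refine (hbest (fun i => α i + t * b i)).not_gt ((sup'_lt_iff hΓ).2 fun z hz => ?_)
    rw [hsub]
    exact ht z hz
  obtain ⟨ℓ, hℓ, hℓk, μ, hμ, hμE, ω, hωpos, hωsum, hω⟩ :=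
    exists_fin_pos_convex_combination_of_mem_convexHull_image h0
  rw [finrank_real_euclideanSpace_complex, Fintype.card_fin] at hℓk
  refine ⟨ℓ, hℓ, hℓk, μ, hμ,
    fun j => (mem_filter.1 (hμE j)).1, fun j => (mem_filter.1 (hμE j)).2, ω, hωpos, hωsum,
    fun β => ?_⟩
  simpa [inner_sum, inner_smul_real_right, inner_toLp_errorConjVector, mul_assoc] using
    congrArg (inner ℂ (WithLp.toLp 2 β)) hω
end

section
/- Let Γ ⊂ ℝ be a finite nonempty set and let f, φ₁, …, φ_k : ℝ → ℝ be functions. A function p* in the real linear span of φ₁, …, φ_k is a polynomial of best approximation for f on Γ if and only if there exist an integer ℓ with 1 ≤ ℓ ≤ k + 1, pairwise distinct points μ₁, …, μ_ℓ ∈ Γ satisfying |f(μⱼ) − p*(μⱼ)| = max_{z∈Γ} |f(z) − p*(z)| for each j, and positive real numbers ω₁, …, ω_ℓ with ω₁ + ⋯ + ω_ℓ = 1, such that Σ_{j=1}^ℓ ωⱼ (f(μⱼ) − p*(μⱼ)) · p(μⱼ) = 0 for every p in the real linear span of φ₁, …, φ_k. -/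
/-!
Write `e = f - p*` and `E = ‖e‖_Γ`. Sufficiency: if the weights `ω` sit on extremal points and are
orthogonal to the span, then for every `q` in the span
`E² = Σ ωⱼ e(μⱼ)² = Σ ωⱼ e(μⱼ) (f - q)(μⱼ) ≤ E ‖f - q‖_Γ`.
Necessity (Kolmogorov's criterion): if `0` is not in the convex hull of the vectors
`e(z) (φ₁(z), …, φₖ(z))` over the extremal points `z`, a separating functional gives a direction
`p = Σ βᵢφᵢ` with `e(z) p(z) > 0` at every extremal point, and `p* + t p` is strictly better for
small `t > 0`. So `0` is such a convex combination, and Carathéodory's theorem in `ℝᵏ` cuts it down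
to at most `k + 1` affinely independent, hence distinct, points.
-/

open Filter Topology Matrix

theorem exists_fin_pos_combination_of_mem_convexHull_image
    {𝕜 E α : Type*} [Field 𝕜] [LinearOrder 𝕜] [IsStrictOrderedRing 𝕜]
    [AddCommGroup E] [Module 𝕜 E] [FiniteDimensional 𝕜 E]
    {v : α → E} {s : Set α} {x : E} (hx : x ∈ convexHull 𝕜 (v '' s)) :
    ∃ ℓ : ℕ, 1 ≤ ℓ ∧ ℓ ≤ Module.finrank 𝕜 E + 1 ∧
      ∃ μ : Fin ℓ → α, Function.Injective μ ∧ (∀ j, μ j ∈ s) ∧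
        ∃ ω : Fin ℓ → 𝕜, (∀ j, 0 < ω j) ∧ ∑ j, ω j = 1 ∧ ∑ j, ω j • v (μ j) = x := by
  obtain ⟨ι, _, z, w, hz, hind, hw, hw1, hwz⟩ := eq_pos_convex_span_of_mem_convexHull hx
  choose μ hμs hvμ using fun i => hz (Set.mem_range_self i)
  have hcard : Fintype.card ι ≤ Module.finrank 𝕜 E + 1 :=
    hind.card_le_finrank_succ.trans (Nat.succ_le_succ (Submodule.finrank_le _))
  have hpos : 0 < Fintype.card ι := by
    obtain ⟨i, -⟩ := Finset.exists_ne_zero_of_sum_ne_zero (hw1 ▸ one_ne_zero : ∑ i, w i ≠ 0)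
    exact Fintype.card_pos_iff.mpr ⟨i⟩
  let e := (Fintype.equivFin ι).symm
  refine ⟨Fintype.card ι, hpos, hcard, μ ∘ e, ?_, fun j => hμs (e j), w ∘ e, fun j => hw (e j),
    ?_, ?_⟩
  · intro j₁ j₂ h
    have hz : z (e j₁) = z (e j₂) := by simpa only [Function.comp_apply, hvμ] using congrArg v h
    exact e.injective (hind.injective hz)
  · rw [← hw1]; exact e.sum_comp w
  · rw [← hwz]
    simp only [Function.comp_apply, hvμ]
    exact e.sum_comp fun i => w i • z i

theorem exists_forall_pos_dotProduct_of_zero_notMem_convexHull {ι : Type*} [Fintype ι]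
    {S : Set (ι → ℝ)} (hS : S.Finite) (h0 : 0 ∉ convexHull ℝ S) :
    ∃ β : ι → ℝ, ∀ v ∈ S, 0 < β ⬝ᵥ v := by
  classical
  obtain ⟨g, u, hg0, hgS⟩ := geometric_hahn_banach_point_closed (convex_convexHull ℝ S)
    (hS.isClosed_convexHull (𝕜 := ℝ)) h0
  refine ⟨fun i => g fun j => if i = j then 1 else 0, fun v hv => ?_⟩
  have hgv : g v = v ⬝ᵥ fun i => g fun j => if i = j then 1 else 0 :=
    LinearMap.pi_apply_eq_sum_univ (g : (ι → ℝ) →ₗ[ℝ] ℝ) v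
  rw [map_zero] at hg0
  rw [dotProduct_comm, ← hgv]
  exact hg0.trans (hgS v (subset_convexHull ℝ S hv))

theorem eventually_abs_sub_mul_lt_of_abs_lt {a E : ℝ} (q : ℝ) (h : |a| < E) :
    ∀ᶠ t in 𝓝 (0 : ℝ), |a - t * q| < E := by
  have hcont : Continuous fun t : ℝ => |a - t * q| := by fun_prop
  exact hcont.continuousAt.eventually_lt continuousAt_const (by simpa using h)

theorem eventually_abs_sub_mul_lt_of_mul_pos {a q : ℝ} (h : 0 < a * q) :
    ∀ᶠ t in 𝓝[>] (0 : ℝ), |a - t * q| < |a| := by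
  have hsmall : ∀ᶠ t in 𝓝 (0 : ℝ), t * q ^ 2 < 2 * (a * q) := by
    have hcont : Continuous fun t : ℝ => t * q ^ 2 := by fun_prop
    exact hcont.continuousAt.eventually_lt continuousAt_const (by simpa using h)
  filter_upwards [nhdsWithin_le_nhds hsmall, self_mem_nhdsWithin] with t ht (htpos : 0 < t)
  refine abs_lt_of_sq_lt_sq ?_ (abs_nonneg a)
  rw [sq_abs]
  -- `(a - t q)² = a² - t (2 a q - t q²)`
  nlinarith [mul_pos htpos (sub_pos.mpr ht)]

theorem Finset.exists_pos_sup'_abs_sub_mul_lt {α : Type*} {s : Finset α} (hs : s.Nonempty)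
    {e q : α → ℝ} (h : ∀ z ∈ s, |e z| = s.sup' hs (fun z => |e z|) → 0 < e z * q z) :
    ∃ t > 0, s.sup' hs (fun z => |e z - t * q z|) < s.sup' hs (fun z => |e z|) := by
  suffices ∀ᶠ t in 𝓝[>] (0 : ℝ), ∀ z ∈ s, |e z - t * q z| < s.sup' hs (fun z => |e z|) by
    obtain ⟨t, ht, htpos⟩ := (this.and self_mem_nhdsWithin).exists
    exact ⟨t, htpos, (Finset.sup'_lt_iff hs).mpr ht⟩
  refine (eventually_all_finset s).mpr fun z hz => ?_
  rcases (Finset.le_sup' (fun z => |e z|) hz).eq_or_lt with hext | hlt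
  · rw [← hext]
    exact eventually_abs_sub_mul_lt_of_mul_pos (h z hz hext)
  · exact nhdsWithin_le_nhds (eventually_abs_sub_mul_lt_of_abs_lt (q z) hlt)

theorem le_of_sum_mul_mul_sub_eq_zero {ι : Type*} [Fintype ι] {ω e d : ι → ℝ} {E B : ℝ}
    (hω : ∀ j, 0 ≤ ω j) (hω1 : ∑ j, ω j = 1) (he : ∀ j, |e j| = E) (hd : ∀ j, |d j| ≤ B)
    (horth : ∑ j, ω j * e j * (e j - d j) = 0) : E ≤ B := by
  obtain ⟨j₀, -⟩ := Finset.exists_ne_zero_of_sum_ne_zero (hω1 ▸ one_ne_zero : ∑ j, ω j ≠ 0)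
  have hE : 0 ≤ E := he j₀ ▸ abs_nonneg _
  have hB : 0 ≤ B := (abs_nonneg _).trans (hd j₀)
  have key : E * E ≤ E * B :=
    calc E * E = ∑ j, ω j * (e j * e j) := by
          simp only [← abs_mul_abs_self (e _), he, ← Finset.sum_mul, hω1, one_mul]
      _ = ∑ j, ω j * (e j * d j) := by
          rw [← sub_eq_zero, ← Finset.sum_sub_distrib, ← horth]
          exact Finset.sum_congr rfl fun j _ => by ring
      _ ≤ ∑ j, ω j * (E * B) := by
          refine Finset.sum_le_sum fun j _ => mul_le_mul_of_nonneg_left ?_ (hω j)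
          rw [← he j]
          exact (le_abs_self _).trans ((abs_mul _ _).trans_le
            (mul_le_mul_of_nonneg_left (hd j) (abs_nonneg _)))
      _ = E * B := by rw [← Finset.sum_mul, hω1, one_mul]
  nlinarith

/-- The Rivlin–Shapiro characterization of best approximation on a finite set of
the real line (real case, with at most `k + 1` extremal points). -/
theorem best_approx_iff_orthogonality_condition_real
    (k : ℕ) (Γ : Finset ℝ) (hΓ : Γ.Nonempty)
    (f : ℝ → ℝ) (φ : Fin k → ℝ → ℝ) (α : Fin k → ℝ)
    (pstar : ℝ → ℝ) (hpstar : pstar = fun z => ∑ i : Fin k, α i * φ i z) :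
    (∀ β : Fin k → ℝ,
      (Γ.sup' hΓ fun z => |f z - pstar z|) ≤
        Γ.sup' hΓ fun z => |f z - ∑ i : Fin k, β i * φ i z|)
    ↔
    ∃ ℓ : ℕ, 1 ≤ ℓ ∧ ℓ ≤ k + 1 ∧
      ∃ μ : Fin ℓ → ℝ, Function.Injective μ ∧ (∀ j, μ j ∈ Γ) ∧
        (∀ j, |f (μ j) - pstar (μ j)| = Γ.sup' hΓ fun z => |f z - pstar z|) ∧
        ∃ ω : Fin ℓ → ℝ, (∀ j, 0 < ω j) ∧ (∑ j, ω j = 1) ∧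
          ∀ β : Fin k → ℝ,
            ∑ j, ω j * (f (μ j) - pstar (μ j)) * (∑ i : Fin k, β i * φ i (μ j)) = 0 := by
  have hshift : ∀ β z, f z - ∑ i, β i * φ i z = f z - pstar z - ∑ i, (β - α) i * φ i z := by
    intro β z
    simp only [hpstar, Pi.sub_apply, sub_mul, Finset.sum_sub_distrib]
    ring
  set E := Γ.sup' hΓ fun z => |f z - pstar z|
  constructor
  · intro hbest
    let v : ℝ → Fin k → ℝ := fun z => (f z - pstar z) • fun i => φ i z
    let extremal := Γ.filter fun z => |f z - pstar z| = E
    have h0 : (0 : Fin k → ℝ) ∈ convexHull ℝ (v '' extremal) := by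
      by_contra h0
      obtain ⟨β, hβ⟩ :=
        exists_forall_pos_dotProduct_of_zero_notMem_convexHull (extremal.finite_toSet.image v) h0
      obtain ⟨t, -, ht⟩ := Finset.exists_pos_sup'_abs_sub_mul_lt hΓ
        (e := fun z => f z - pstar z) (q := fun z => ∑ i, β i * φ i z) fun z hz hext =>
          (hβ _ ⟨z, Finset.mem_filter.mpr ⟨hz, hext⟩, rfl⟩).trans_eq (dotProduct_smul _ _ _)
      refine (hbest (α + t • β)).not_gt (lt_of_eq_of_lt ?_ ht)
      refine Finset.sup'_congr hΓ rfl fun z _ => ?_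
      simp only [hshift, add_sub_cancel_left, Pi.smul_apply, smul_eq_mul, mul_assoc,
        ← Finset.mul_sum]
    obtain ⟨ℓ, hℓ1, hℓk, μ, hμ, hμs, ω, hω, hω1, hcomb⟩ :=
      exists_fin_pos_combination_of_mem_convexHull_image h0
    refine ⟨ℓ, hℓ1, by simpa using hℓk, μ, hμ, fun j => (Finset.mem_filter.mp (hμs j)).1,
      fun j => (Finset.mem_filter.mp (hμs j)).2, ω, hω, hω1, fun β => ?_⟩
    calc ∑ j, ω j * (f (μ j) - pstar (μ j)) * (∑ i, β i * φ i (μ j))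
        = β ⬝ᵥ ∑ j, ω j • v (μ j) := by
          simp only [dotProduct_sum, dotProduct_smul, smul_eq_mul, v]
          exact Finset.sum_congr rfl fun j _ => mul_assoc _ _ _
      _ = 0 := by rw [hcomb, dotProduct_zero]
  · rintro ⟨ℓ, -, -, μ, -, hμΓ, hext, ω, hω, hω1, horth⟩ β
    refine le_of_sum_mul_mul_sub_eq_zero (fun j => (hω j).le) hω1 hext
      (fun j => Finset.le_sup' (fun z => |f z - ∑ i, β i * φ i z|) (hμΓ j)) ?_
    simpa only [hshift, sub_sub_cancel] using horth (β - α)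
end

section
/- Let Γ ⊂ ℂ be a finite nonempty set closed under complex conjugation, let f, φ₁, …, φ_k : ℂ → ℂ be functions satisfying conj(f(z)) = f(conj(z)) and conj(φᵢ(z)) = φᵢ(conj(z)) for all z ∈ Γ and i = 1, …, k, and let p* = Σ_{i=1}^k αᵢφᵢ with real coefficients αᵢ ∈ ℝ. Suppose there are pairwise distinct points μ₁, …, μ_ℓ ∈ Γ and positive reals ω₁, …, ω_ℓ with Σⱼ ωⱼ = 1 such that Σ_{j=1}^ℓ ωⱼ (f(μⱼ) − p*(μⱼ)) · conj(p(μⱼ)) = 0 for every p in the real linear span of φ₁, …, φ_k. Then there exist pairwise distinct points θ₁, …, θ_m ∈ Γ whose set {θ₁, …, θ_m} is closed under complex conjugation, with {μ₁, …, μ_ℓ} ⊆ {θ₁, …, θ_m} and ℓ ≤ m ≤ 2ℓ, and positive reals ω̃₁, …, ω̃_m with Σᵢ ω̃ᵢ = 1 such that ω̃ᵢ = ω̃ⱼ whenever θⱼ = conj(θᵢ), and Σ_{i=1}^m ω̃ᵢ (f(θᵢ) − p*(θᵢ)) · conj(p(θᵢ)) = 0 for every p in the real linear span of φ₁, …, φ_k.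 -/
/-!
Push the weights forward to `w := extend μ ω 0 : ℂ → ℝ` and average it with its reflection,
`w̃ z = (w z + w (conj z)) / 2`, on `S = {μⱼ} ∪ {conj μⱼ}`. For real `β` the integrand
`(f - p*) · conj (∑ βᵣ φᵣ)` commutes with conjugation on `Γ`, so the orthogonality sum taken
with `w ∘ conj` is the complex conjugate of the one taken with `w`, hence also zero.
-/

open Finset Function ComplexConjugate

section Involution

variable {α R E : Type*} {σ : α → α}

theorem Finset.sum_comp_of_involutive [AddCommMonoid E] (hσ : Involutive σ) {s : Finset α}
    (hs : ∀ x ∈ s, σ x ∈ s) (g : α → E) : ∑ x ∈ s, g (σ x) = ∑ x ∈ s, g x :=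
  sum_nbij' σ σ hs hs (fun x _ => hσ x) (fun x _ => hσ x) fun _ _ => rfl

theorem Finset.sum_equivFin_symm [AddCommMonoid E] (s : Finset α) (g : α → E) :
    ∑ i, g (s.equivFin.symm i) = ∑ x ∈ s, g x :=
  (s.equivFin.symm.sum_comp (g ∘ (↑))).trans (s.sum_coe_sort g)

theorem Finset.sum_extend_smul [Semiring R] [AddCommMonoid E] [Module R E] {ι : Type*}
    [Fintype ι] {μ : ι → α} (hμ : Injective μ) {s : Finset α} (hs : ∀ j, μ j ∈ s) (v : ι → R)
    (g : α → E) : ∑ x ∈ s, extend μ v 0 x • g x = ∑ j, v j • g (μ j) := by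
  classical
  calc ∑ x ∈ s, extend μ v 0 x • g x = ∑ x ∈ univ.image μ, extend μ v 0 x • g x := by
        refine (sum_subset (fun x hx => ?_) fun x _ hx => ?_).symm
        · obtain ⟨j, -, rfl⟩ := mem_image.1 hx
          exact hs j
        · rw [extend_apply' _ _ _ (by simpa using hx), Pi.zero_apply, zero_smul]
    _ = ∑ j, v j • g (μ j) := by
        rw [sum_image fun i _ j _ h => hμ h]
        simp only [hμ.extend_apply]

noncomputable def symmetrize (σ : α → α) (w : α → ℝ) (x : α) : ℝ := (w x + w (σ x)) / 2

theorem symmetrize_apply_of_involutive (hσ : Involutive σ) (w : α → ℝ) (x : α) :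
    symmetrize σ w (σ x) = symmetrize σ w x := by
  rw [symmetrize, symmetrize, hσ x, add_comm]

theorem Finset.sum_symmetrize_smul [AddCommGroup E] [Module ℝ E] (hσ : Involutive σ)
    {s : Finset α} (hs : ∀ x ∈ s, σ x ∈ s) (w : α → ℝ) (g : α → E) :
    ∑ x ∈ s, symmetrize σ w x • g x =
      (2⁻¹ : ℝ) • (∑ x ∈ s, w x • g x + ∑ x ∈ s, w x • g (σ x)) := by
  have hswap : ∑ x ∈ s, w x • g (σ x) = ∑ x ∈ s, w (σ x) • g x := by
    rw [← sum_comp_of_involutive hσ hs]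
    simp only [hσ _]
  rw [hswap, ← sum_add_distrib, smul_sum]
  refine sum_congr rfl fun x _ => ?_
  rw [symmetrize, div_eq_inv_mul, mul_smul, add_smul]

variable [DecidableEq α] {s t : Finset α} {x : α}

def Finset.involutionClosure (σ : α → α) (s : Finset α) : Finset α := s ∪ s.image σ

theorem Finset.subset_involutionClosure : s ⊆ s.involutionClosure σ := subset_union_left

theorem Finset.involutionClosure_subset (hst : s ⊆ t) (ht : ∀ x ∈ t, σ x ∈ t) :
    s.involutionClosure σ ⊆ t :=
  union_subset hst (image_subset_iff.2 fun x hx => ht x (hst hx))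

theorem Finset.apply_mem_involutionClosure (hσ : Involutive σ)
    (hx : x ∈ s.involutionClosure σ) : σ x ∈ s.involutionClosure σ := by
  rcases mem_union.1 hx with hx | hx
  · exact mem_union_right _ (mem_image_of_mem σ hx)
  · obtain ⟨y, hy, rfl⟩ := mem_image.1 hx
    exact mem_union_left _ ((hσ y).symm ▸ hy)

theorem Finset.card_involutionClosure_le : #(s.involutionClosure σ) ≤ 2 * #s :=
  (card_union_le _ _).trans (by linarith [card_image_le (s := s) (f := σ)])

theorem symmetrize_pos (hσ : Involutive σ) {w : α → ℝ} (hw : ∀ x, 0 ≤ w x)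
    (hs : ∀ x ∈ s, 0 < w x) (hx : x ∈ s.involutionClosure σ) : 0 < symmetrize σ w x := by
  rcases mem_union.1 hx with hx | hx
  · rw [symmetrize]
    linarith [hs x hx, hw (σ x)]
  · obtain ⟨y, hy, rfl⟩ := mem_image.1 hx
    rw [symmetrize_apply_of_involutive hσ, symmetrize]
    linarith [hs y hy, hw (σ y)]

end Involution

def ConjSymmOn (s : Set ℂ) (g : ℂ → ℂ) : Prop := ∀ z ∈ s, conj (g z) = g (conj z)

namespace ConjSymmOn

variable {s : Set ℂ} {g h : ℂ → ℂ}

theorem mono (hg : ConjSymmOn s g) {t : Set ℂ} (hts : t ⊆ s) : ConjSymmOn t g :=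
  fun z hz => hg z (hts hz)

theorem sub (hg : ConjSymmOn s g) (hh : ConjSymmOn s h) : ConjSymmOn s fun z => g z - h z :=
  fun z hz => by rw [map_sub, hg z hz, hh z hz]

theorem mul (hg : ConjSymmOn s g) (hh : ConjSymmOn s h) : ConjSymmOn s fun z => g z * h z :=
  fun z hz => by rw [map_mul, hg z hz, hh z hz]

theorem star (hg : ConjSymmOn s g) : ConjSymmOn s fun z => conj (g z) :=
  fun z hz => congrArg conj (hg z hz)

theorem ofReal_mul (hg : ConjSymmOn s g) (r : ℝ) : ConjSymmOn s fun z => r * g z :=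
  fun z hz => by rw [map_mul, Complex.conj_ofReal, hg z hz]

theorem sum {ι : Type*} (t : Finset ι) {g : ι → ℂ → ℂ} (hg : ∀ i ∈ t, ConjSymmOn s (g i)) :
    ConjSymmOn s fun z => ∑ i ∈ t, g i z :=
  fun z hz => by rw [map_sum]; exact sum_congr rfl fun i hi => hg i hi z hz

theorem sum_smul_comp_conj {t : Finset ℂ} (hg : ConjSymmOn t g) (w : ℂ → ℝ) :
    ∑ z ∈ t, w z • g (conj z) = conj (∑ z ∈ t, w z • g z) := by
  rw [map_sum]
  exact sum_congr rfl fun z hz => by rw [RCLike.conj_smul, hg z hz]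

end ConjSymmOn

theorem exists_conj_symmetric_weights {Γ : Finset ℂ} (hΓ : ∀ z ∈ Γ, conj z ∈ Γ)
    {ι B : Type*} [Fintype ι] {μ : ι → ℂ} (hμ : Injective μ) (hμΓ : ∀ j, μ j ∈ Γ)
    {ω : ι → ℝ} (hω : ∀ j, 0 < ω j) (hωsum : ∑ j, ω j = 1) {G : B → ℂ → ℂ}
    (hG : ∀ b, ConjSymmOn Γ (G b)) (horth : ∀ b, ∑ j, ω j • G b (μ j) = 0) :
    ∃ S : Finset ℂ, ∃ w : ℂ → ℝ, Fintype.card ι ≤ #S ∧ #S ≤ 2 * Fintype.card ι ∧ S ⊆ Γ ∧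
      (∀ z ∈ S, conj z ∈ S) ∧ (∀ j, μ j ∈ S) ∧ (∀ z ∈ S, 0 < w z) ∧ ∑ z ∈ S, w z = 1 ∧
      (∀ z, w (conj z) = w z) ∧ ∀ b, ∑ z ∈ S, w z • G b z = 0 := by
  classical
  set T := univ.image μ
  have hconj : Involutive (conj : ℂ → ℂ) := Complex.conj_conj
  have hcardT : #T = Fintype.card ι := card_image_of_injective _ hμ
  have hμS : ∀ j, μ j ∈ T.involutionClosure conj :=
    fun j => subset_involutionClosure (mem_image_of_mem μ (mem_univ j))
  have hSconj : ∀ z ∈ T.involutionClosure conj, conj z ∈ T.involutionClosure conj :=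
    fun _ => apply_mem_involutionClosure hconj
  have hSΓ : T.involutionClosure conj ⊆ Γ :=
    involutionClosure_subset (image_subset_iff.2 fun j _ => hμΓ j) hΓ
  have hw0 : 0 ≤ extend μ ω 0 := extend_nonneg (fun j => (hω j).le) le_rfl
  have hwT : ∀ z ∈ T, 0 < extend μ ω 0 z := fun z hz => by
    obtain ⟨j, -, rfl⟩ := mem_image.1 hz
    rw [hμ.extend_apply]
    exact hω j
  refine ⟨T.involutionClosure conj, symmetrize conj (extend μ ω 0),
    hcardT ▸ card_le_card subset_involutionClosure, hcardT ▸ card_involutionClosure_le, hSΓ,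
    hSconj, hμS, fun z => symmetrize_pos hconj (hw0 ·) hwT,
    ?_, symmetrize_apply_of_involutive hconj _, fun b => ?_⟩
  · have hmass : ∑ z ∈ T.involutionClosure conj, extend μ ω 0 z = 1 := by
      simpa [hωsum] using sum_extend_smul hμ hμS ω fun _ => (1 : ℝ)
    have h := sum_symmetrize_smul hconj hSconj (extend μ ω 0) fun _ => (1 : ℝ)
    norm_num [hmass] at h
    exact h
  · rw [sum_symmetrize_smul hconj hSconj, ((hG b).mono (coe_subset.2 hSΓ)).sum_smul_comp_conj,
      sum_extend_smul hμ hμS, horth, map_zero, add_zero, smul_zero]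

/-- Symmetrization of the orthogonality condition with respect to the real axis:
from extremal points `μ₁, …, μ_ℓ` and weights `ω₁, …, ω_ℓ` one obtains a
conjugation-closed set of points `θ₁, …, θ_m` with `ℓ ≤ m ≤ 2ℓ` and weights
`ω̃₁, …, ω̃_m` that are symmetric under conjugation and satisfy the same
orthogonality condition for the real span. -/
theorem symmetrized_orthogonality_condition
    (k : ℕ) (Γ : Finset ℂ)
    (hΓsym : ∀ z ∈ Γ, (starRingEnd ℂ) z ∈ Γ)
    (f : ℂ → ℂ) (φ : Fin k → ℂ → ℂ)
    (hf : ∀ z ∈ Γ, (starRingEnd ℂ) (f z) = f ((starRingEnd ℂ) z))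
    (hφ : ∀ i, ∀ z ∈ Γ, (starRingEnd ℂ) (φ i z) = φ i ((starRingEnd ℂ) z))
    (α : Fin k → ℝ)
    (pstar : ℂ → ℂ) (hpstar : pstar = fun z => ∑ i : Fin k, (α i : ℂ) * φ i z)
    (ℓ : ℕ) (μ : Fin ℓ → ℂ) (hμinj : Function.Injective μ) (hμΓ : ∀ j, μ j ∈ Γ)
    (ω : Fin ℓ → ℝ) (hωpos : ∀ j, 0 < ω j) (hωsum : ∑ j, ω j = 1)
    (horth : ∀ β : Fin k → ℝ,
      ∑ j, (ω j : ℂ) * (f (μ j) - pstar (μ j)) *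
        (starRingEnd ℂ) (∑ i : Fin k, (β i : ℂ) * φ i (μ j)) = 0) :
    ∃ m : ℕ, ℓ ≤ m ∧ m ≤ 2 * ℓ ∧
      ∃ θ : Fin m → ℂ, Function.Injective θ ∧ (∀ i, θ i ∈ Γ) ∧
        (∀ i, ∃ i', θ i' = (starRingEnd ℂ) (θ i)) ∧
        (∀ j, ∃ i, θ i = μ j) ∧
        ∃ ωt : Fin m → ℝ, (∀ i, 0 < ωt i) ∧ (∑ i, ωt i = 1) ∧
          (∀ i i', θ i' = (starRingEnd ℂ) (θ i) → ωt i' = ωt i) ∧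
          ∀ β : Fin k → ℝ,
            ∑ i, (ωt i : ℂ) * (f (θ i) - pstar (θ i)) *
              (starRingEnd ℂ) (∑ r : Fin k, (β r : ℂ) * φ r (θ i)) = 0 := by
  set G : (Fin k → ℝ) → ℂ → ℂ := fun β z => (f z - pstar z) * conj (∑ r, (β r : ℂ) * φ r z)
  have hpstarΓ : ConjSymmOn Γ pstar :=
    hpstar ▸ ConjSymmOn.sum _ fun i _ => ConjSymmOn.ofReal_mul (hφ i) (α i)
  have hG : ∀ β, ConjSymmOn Γ (G β) := fun β =>
    (ConjSymmOn.sub hf hpstarΓ).mul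
      (ConjSymmOn.sum _ fun r _ => ConjSymmOn.ofReal_mul (hφ r) (β r)).star
  obtain ⟨S, w, hℓS, hS2ℓ, hSΓ, hSconj, hμS, hwpos, hwsum, hwconj, hworth⟩ :=
    exists_conj_symmetric_weights hΓsym hμinj hμΓ hωpos hωsum hG fun β => by
      simpa only [G, Complex.real_smul, mul_assoc] using horth β
  let θ : Fin #S → ℂ := fun i => S.equivFin.symm i
  have hθS : ∀ i, θ i ∈ S := fun i => (S.equivFin.symm i).2
  refine ⟨#S, by simpa using hℓS, by simpa using hS2ℓ, θ,
    Subtype.val_injective.comp S.equivFin.symm.injective, fun i => hSΓ (hθS i),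
    fun i => ⟨S.equivFin ⟨_, hSconj _ (hθS i)⟩, by simp [θ]⟩,
    fun j => ⟨S.equivFin ⟨_, hμS j⟩, by simp [θ]⟩, w ∘ θ, fun i => hwpos _ (hθS i),
    (S.sum_equivFin_symm w).trans hwsum, fun i i' h => by simp [h, hwconj], fun β => ?_⟩
  simpa only [G, θ, comp_apply, Complex.real_smul, mul_assoc] using
    (S.sum_equivFin_symm _).trans (hworth β)
end
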